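/- arXiv:2202.05230 — 2 statements merged into one kernel-verified Lean document; each statement's English description precedes it below -/
import Mathlib

section
/- Let R be a commutative ring and let I ⊆ R be an ideal equipped with a divided power structure γ (a family of maps γₙ : I → R, n ≥ 0, satisfying the divided power axioms, so that n!·γₙ(x) = xⁿ for all x ∈ I). Let T ⊆ R denote the ideal of additive torsion elements of R, i.e. T = {r ∈ R : n·r = 0 for some positive integer n}. Then the image ideal Ī of I under the quotient map q : R → R/T carries a divided power structure γ̄ compatible with γ, i.e. a divided power structure γ̄ on Ī such that γ̄ₙ(q(x)) = q(γₙ(x)) for every n ≥ 0 and every x ∈ I. -/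
namespace DividedPowers

variable {A : Type*} [CommSemiring A] {I : Ideal A} (γ : DividedPowers I)

theorem pow_nsmul_dpow_eq_zero {m n : ℕ} {x : A} (hx : x ∈ I) (hn : n ≠ 0) (hmx : m • x = 0) :
    m ^ n • γ.dpow n x = 0 := by
  rw [nsmul_eq_mul, Nat.cast_pow, ← γ.dpow_mul hx, ← nsmul_eq_mul, hmx, γ.dpow_eval_zero hn]

theorem isSubDPIdeal_inf_of_forall_mem_iff_torsion {T : Ideal A}
    (hT : ∀ r : A, r ∈ T ↔ ∃ n : ℕ, 0 < n ∧ n • r = 0) : IsSubDPIdeal γ (T ⊓ I) where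
  isSubideal := inf_le_right
  dpow_mem n hn x hx := by
    obtain ⟨m, hm, hmx⟩ := (hT x).mp hx.1
    exact ⟨(hT _).mpr ⟨m ^ n, pow_pos hm n, γ.pow_nsmul_dpow_eq_zero hx.2 hn hmx⟩,
      γ.dpow_mem hn hx.2⟩

end DividedPowers

/-- Let `R` be a commutative ring and `I ⊆ R` an ideal equipped with a
divided power structure `γ`. Let `T ⊆ R` be the ideal of additive torsion elements
(elements killed by some positive integer). Then the image of `I` in `R/T` carries a
divided power structure `γ̄` compatible with `γ`, i.e. `γ̄ₙ(q x) = q (γₙ x)` for all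
`n ≥ 0` and `x ∈ I`, where `q : R → R/T` is the quotient map. -/
theorem dividedPowers_quotient_torsion {R : Type*} [CommRing R] (I : Ideal R)
    (γ : DividedPowers I) (T : Ideal R)
    (hT : ∀ r : R, r ∈ T ↔ ∃ n : ℕ, 0 < n ∧ n • r = 0) :
    ∃ γbar : DividedPowers (I.map (Ideal.Quotient.mk T)),
      ∀ (n : ℕ) (x : R), x ∈ I →
        γbar.dpow n (Ideal.Quotient.mk T x) = Ideal.Quotient.mk T (γ.dpow n x) := by
  have hTI := γ.isSubDPIdeal_inf_of_forall_mem_iff_torsion hT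
  exact ⟨DividedPowers.Quotient.dividedPowers γ hTI,
    fun _ _ hx ↦ DividedPowers.Quotient.dpow_apply γ hTI hx⟩
end

section
/- Let g be a positive integer and let ℓ be a prime number. Consider the real symplectic group Sp₂g(ℝ) = {M ∈ GL₂g(ℝ) : M · J · Mᵀ = J}, where J = [[0, 1_g], [−1_g, 0]], topologized as a subspace of the space of 2g×2g real matrices. Then the subgroup Sp₂g(ℤ[1/ℓ]) consisting of those symplectic matrices all of whose entries lie in ℤ[1/ℓ] ⊆ ℝ (i.e. each entry is of the form a/ℓᵏ with a ∈ ℤ, k ∈ ℕ) is dense in Sp₂g(ℝ): the closure in the space of 2g×2g real matrices of the set of symplectic matrices with entries in ℤ[1/ℓ] contains every real symplectic matrix. -/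
/-!
Only the density of `ℤ[1/ℓ]` in `ℝ` matters (it contains `ℓ⁻ⁿ → 0`). For a dense subring
`S ⊆ ℝ`, the closure `K` of the symplectic matrices with entries in `S` is a closed submonoid.
The unipotents `fromBlocks 1 B 0 1` and `fromBlocks 1 0 C 1` with `B`, `C` symmetric lie in `K`:
a symmetric matrix is a sum of real multiples of the symmetric integral matrices `Eᵢⱼ + Eᵢⱼᵀ`,
and along each of these lines the points with parameter in `S` are dense. Products of unipotents
give `diag(X, X⁻¹)` for symmetric invertible `X`, hence all diagonal Levi matrices
`diag(E, E⁻ᵀ)`; Levi matrices of transvections are approximated directly, and Gaussian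
elimination then gives every invertible `E`. A symplectic matrix whose upper-left block `A` is
invertible is (lower unipotent) · (Levi) · (upper unipotent). Finally, an upper shear by `s • 1`
replaces `A` by `A + s C`, and `det (A + s C)` is a nonzero polynomial in `s`, because
`(Aᵀ - i Cᵀ) (A + i C) = Aᵀ A + Cᵀ C` is positive definite.
-/

open Matrix

namespace SymplecticGroup

variable {ι R : Type*} [DecidableEq ι] [CommRing R]

def upperUnipotent (B : Matrix ι ι R) : Matrix (ι ⊕ ι) (ι ⊕ ι) R := fromBlocks 1 B 0 1

def lowerUnipotent (C : Matrix ι ι R) : Matrix (ι ⊕ ι) (ι ⊕ ι) R := fromBlocks 1 0 C 1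

theorem upperUnipotent_zero : upperUnipotent (0 : Matrix ι ι R) = 1 := by
  simp [upperUnipotent]

theorem lowerUnipotent_zero : lowerUnipotent (0 : Matrix ι ι R) = 1 := by
  simp [lowerUnipotent]

theorem transpose_transvection (i j : ι) (c : R) :
    (transvection i j c)ᵀ = transvection j i c := by
  simp [transvection, transpose_single]

variable [Fintype ι]

theorem upperUnipotent_mem {B : Matrix ι ι R} (hB : B.IsSymm) :
    upperUnipotent B ∈ symplecticGroup ι R :=
  fromBlocks_mem_iff.2 ⟨by simp, by simpa using hB.eq, by simp⟩

theorem lowerUnipotent_mem {C : Matrix ι ι R} (hC : C.IsSymm) :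
    lowerUnipotent C ∈ symplecticGroup ι R :=
  fromBlocks_mem_iff.2 ⟨by simpa using hC.eq.symm, by simp, by simp⟩

theorem upperUnipotent_add (B B' : Matrix ι ι R) :
    upperUnipotent (B + B') = upperUnipotent B * upperUnipotent B' := by
  simp [upperUnipotent, fromBlocks_multiply, add_comm]

theorem lowerUnipotent_add (C C' : Matrix ι ι R) :
    lowerUnipotent (C + C') = lowerUnipotent C * lowerUnipotent C' := by
  simp [lowerUnipotent, fromBlocks_multiply, add_comm]

theorem upperUnipotent_sum_mem {α : Type*} {K : Submonoid (Matrix (ι ⊕ ι) (ι ⊕ ι) R)}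
    {s : Finset α} {f : α → Matrix ι ι R} (h : ∀ a ∈ s, upperUnipotent (f a) ∈ K) :
    upperUnipotent (∑ a ∈ s, f a) ∈ K :=
  Finset.sum_induction f (fun X ↦ upperUnipotent X ∈ K)
    (fun X Y hX hY ↦ upperUnipotent_add X Y ▸ mul_mem hX hY)
    (by rw [upperUnipotent_zero]; exact K.one_mem) h

theorem lowerUnipotent_eq_J_mul_upperUnipotent_mul (C : Matrix ι ι R) :
    lowerUnipotent C = J ι R * upperUnipotent (-C) * -J ι R := by
  simp [lowerUnipotent, upperUnipotent, J, fromBlocks_multiply, fromBlocks_neg]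

theorem upperUnipotent_mul_fromBlocks (X A B C D : Matrix ι ι R) :
    upperUnipotent X * fromBlocks A B C D = fromBlocks (A + X * C) (B + X * D) C D := by
  simp [upperUnipotent, fromBlocks_multiply]

theorem lowerUnipotent_mul_fromBlocks (Y A B C D : Matrix ι ι R) :
    lowerUnipotent Y * fromBlocks A B C D = fromBlocks A B (Y * A + C) (Y * B + D) := by
  simp [lowerUnipotent, fromBlocks_multiply]

/-- `E⁻¹` is junk for singular `E`, but `levi` is still multiplicative on all matrices, since
`(E * E')⁻¹ = E'⁻¹ * E⁻¹` holds unconditionally. -/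
noncomputable def levi : Matrix ι ι R →* Matrix (ι ⊕ ι) (ι ⊕ ι) R where
  toFun E := fromBlocks E 0 0 E⁻¹ᵀ
  map_one' := by simp
  map_mul' E E' := by simp [fromBlocks_multiply, Matrix.mul_inv_rev]

theorem levi_apply (E : Matrix ι ι R) : levi E = fromBlocks E 0 0 E⁻¹ᵀ := rfl

theorem levi_mem {E : Matrix ι ι R} (hE : IsUnit E.det) : levi E ∈ symplecticGroup ι R :=
  fromBlocks_mem_iff.2 ⟨by simp, by simp, by simp [← transpose_mul, nonsing_inv_mul _ hE]⟩

theorem levi_transvection {i j : ι} (hij : i ≠ j) (c : R) :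
    levi (transvection i j c) = fromBlocks (transvection i j c) 0 0 (transvection j i (-c)) := by
  rw [levi_apply, inv_eq_left_inv (B := transvection i j (-c)), transpose_transvection]
  rw [transvection_mul_transvection_same _ _ hij, neg_add_cancel, transvection_zero]

theorem levi_eq_unipotent_prod {X : Matrix ι ι R} (hX : X.IsSymm) (hdet : IsUnit X.det) :
    levi X = upperUnipotent X * lowerUnipotent (-X⁻¹) * upperUnipotent X *
      (upperUnipotent (-1) * lowerUnipotent 1 * upperUnipotent (-1)) := by
  have hXinv : X * X⁻¹ = 1 := mul_nonsing_inv X hdet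
  have hinvX : X⁻¹ * X = 1 := nonsing_inv_mul X hdet
  simp [levi_apply, upperUnipotent, lowerUnipotent, fromBlocks_multiply, hXinv, hinvX,
    transpose_nonsing_inv, hX.eq]

theorem fromBlocks_zero₂₁_eq_levi_mul {A B D : Matrix ι ι R}
    (h : fromBlocks A B 0 D ∈ symplecticGroup ι R) :
    fromBlocks A B 0 D = levi A * upperUnipotent (Dᵀ * B) ∧ (Dᵀ * B).IsSymm := by
  obtain ⟨-, hBD, hAD⟩ := fromBlocks_mem_iff.1 h
  have hAD : Aᵀ * D = 1 := by simpa using hAD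
  have hDA : A * Dᵀ = 1 := by simpa using congrArg transpose (mul_eq_one_comm.1 hAD)
  have hinv : A⁻¹ᵀ = D := by rw [transpose_nonsing_inv, inv_eq_right_inv hAD]
  refine ⟨?_, by simp [IsSymm, hBD]⟩
  simp [levi_apply, upperUnipotent, fromBlocks_multiply, hinv, ← Matrix.mul_assoc, hDA]

theorem isSymm_mul_inv_of_fromBlocks_mem {A B C D : Matrix ι ι R}
    (h : fromBlocks A B C D ∈ symplecticGroup ι R) (hA : IsUnit A.det) : (C * A⁻¹).IsSymm := by
  obtain ⟨hAC, -, -⟩ := fromBlocks_mem_iff.1 h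
  have hCt : Cᵀ = Aᵀ * C * A⁻¹ := by rw [hAC, Matrix.mul_assoc, mul_nonsing_inv _ hA, mul_one]
  rw [IsSymm, transpose_mul, transpose_nonsing_inv, hCt, ← Matrix.mul_assoc, ← Matrix.mul_assoc,
    nonsing_inv_mul _ (by rwa [det_transpose]), one_mul]

end SymplecticGroup

open SymplecticGroup

variable {ι : Type*} [Fintype ι] [DecidableEq ι]

theorem Matrix.IsSymm.eq_sum_smul_single_add_transpose {B : Matrix ι ι ℝ} (hB : B.IsSymm) :
    B = ∑ i, ∑ j, (B i j / 2) • (single i j 1 + (single i j 1)ᵀ) := by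
  ext a b
  have hba : B b a = B a b := by simpa using congrFun (congrFun hB.eq a) b
  simp [Matrix.sum_apply, single_apply, Finset.sum_add_distrib, ite_and, hba]

theorem Matrix.posDef_transpose_mul_add_transpose_mul {A B C D : Matrix ι ι ℝ}
    (h : IsUnit (fromBlocks A B C D).det) : (Aᵀ * A + Cᵀ * C).PosDef := by
  have hinj := mulVec_injective_iff_isUnit.2 ((isUnit_iff_isUnit_det _).2 h)
  have hsub := (PosDef.conjTranspose_mul_self _ hinj).submatrix Sum.inl_injective
  simp only [conjTranspose_eq_transpose_of_trivial, fromBlocks_transpose, fromBlocks_multiply]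
    at hsub
  exact hsub

open Polynomial in
theorem Matrix.exists_isUnit_det_add_smul {A C : Matrix ι ι ℝ} (hAC : Aᵀ * C = Cᵀ * A)
    (hpos : (Aᵀ * A + Cᵀ * C).PosDef) : ∃ s : ℝ, IsUnit (A + s • C).det := by
  let P : ℝ[X] := det (A.map Polynomial.C + (X : ℝ[X]) • C.map Polynomial.C)
  have hP {S : Type} [CommRing S] (f : ℝ →+* S) (z : S) :
      P.eval₂ f z = det (A.map f + z • C.map f) := by
    rw [← coe_eval₂RingHom, RingHom.map_det]
    congr 1
    ext i j
    simp [mul_comm z]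
  have hI : det (A.map Complex.ofRealHom + Complex.I • C.map Complex.ofRealHom) ≠ 0 := by
    set f := Complex.ofRealHom
    have hAC' : (A.map f)ᵀ * C.map f = (C.map f)ᵀ * A.map f := by
      rw [← transpose_map, ← transpose_map, ← Matrix.map_mul, hAC, Matrix.map_mul]
    have hfac : ((A.map f)ᵀ - Complex.I • (C.map f)ᵀ) * (A.map f + Complex.I • C.map f) =
        (Aᵀ * A + Cᵀ * C).map f := by
      rw [Matrix.map_add _ (map_add f), Matrix.map_mul, Matrix.map_mul, transpose_map,
        transpose_map]
      simp only [sub_mul, mul_add, smul_mul_assoc, mul_smul_comm, hAC']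
      rw [smul_sub, smul_smul, Complex.I_mul_I, neg_one_smul]
      abel
    intro h0
    have hdet := congrArg det hfac
    rw [det_mul, h0, mul_zero, ← RingHom.mapMatrix_apply, ← RingHom.map_det] at hdet
    exact hpos.det_pos.ne' (Complex.ofReal_eq_zero.1 hdet.symm)
  by_contra! h
  have hP0 : P = 0 := Polynomial.funext fun s ↦ by
    simpa [← eval₂_id, hP, isUnit_iff_ne_zero] using h s
  exact hI (by rw [← hP, hP0, eval₂_zero])

def Subring.symplecticGroup {R : Type*} [CommRing R] (S : Subring R) (ι : Type*) [Fintype ι]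
    [DecidableEq ι] : Submonoid (Matrix (ι ⊕ ι) (ι ⊕ ι) R) :=
  Matrix.symplecticGroup ι R ⊓ S.matrix.toSubmonoid

namespace Subring

section Ring

variable {R : Type*} [CommRing R] (S : Subring R)

theorem fromBlocks_mem_matrix {A B C D : Matrix ι ι R} (hA : A ∈ S.matrix) (hB : B ∈ S.matrix)
    (hC : C ∈ S.matrix) (hD : D ∈ S.matrix) :
    (fromBlocks A B C D : Matrix (ι ⊕ ι) (ι ⊕ ι) R) ∈ S.matrix := by
  rintro (i | i) (j | j)
  exacts [hA i j, hB i j, hC i j, hD i j]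

theorem single_mem_matrix {i j : ι} {c : R} (hc : c ∈ S) :
    (single i j c : Matrix ι ι R) ∈ S.matrix :=
  (Matrix.single_mem_matrix S.zero_mem).2 hc

theorem J_mem_symplecticGroup : J ι R ∈ S.symplecticGroup ι :=
  ⟨SymplecticGroup.J_mem ι R,
    fromBlocks_mem_matrix S (zero_mem _) (neg_mem (one_mem _)) (one_mem _) (zero_mem _)⟩

theorem neg_J_mem_symplecticGroup : -J ι R ∈ S.symplecticGroup ι :=
  ⟨SymplecticGroup.neg_mem (SymplecticGroup.J_mem ι R),
    (S.matrix (n := ι ⊕ ι)).neg_mem (J_mem_symplecticGroup S).2⟩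

end Ring

variable {S : Subring ℝ} (hS : Dense (S : Set ℝ))
include hS

theorem mem_topologicalClosure_of_continuous {f : ℝ → Matrix (ι ⊕ ι) (ι ⊕ ι) ℝ}
    (hf : Continuous f) (hfS : ∀ c ∈ S, f c ∈ S.symplecticGroup ι) (c : ℝ) :
    f c ∈ (S.symplecticGroup ι).topologicalClosure := by
  rw [← SetLike.mem_coe, Submonoid.coe_topologicalClosure]
  exact _root_.closure_mono (Set.image_subset_iff.2 hfS)
    (hf.range_subset_closure_image_dense hS ⟨c, rfl⟩)

theorem upperUnipotent_mem_topologicalClosure {B : Matrix ι ι ℝ} (hB : B.IsSymm) :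
    upperUnipotent B ∈ (S.symplecticGroup ι).topologicalClosure := by
  have hline (i j : ι) (c : ℝ) :
      upperUnipotent (c • (single i j 1 + (single i j 1)ᵀ)) ∈
        (S.symplecticGroup ι).topologicalClosure := by
    refine mem_topologicalClosure_of_continuous hS (by unfold upperUnipotent; fun_prop)
      (fun c hc ↦ ⟨upperUnipotent_mem ((isSymm_add_transpose_self _).smul c), ?_⟩) c
    have hE : single i j 1 + (single i j 1)ᵀ ∈ S.matrix :=
      add_mem (single_mem_matrix S S.one_mem)
        (transpose_mem_matrix_iff.2 (single_mem_matrix S S.one_mem))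
    exact fromBlocks_mem_matrix S (one_mem _) (fun a b ↦ S.mul_mem hc (hE a b)) (zero_mem _)
      (one_mem _)
  rw [hB.eq_sum_smul_single_add_transpose]
  exact upperUnipotent_sum_mem fun i _ ↦ upperUnipotent_sum_mem fun j _ ↦ hline i j _

theorem lowerUnipotent_mem_topologicalClosure {C : Matrix ι ι ℝ} (hC : C.IsSymm) :
    lowerUnipotent C ∈ (S.symplecticGroup ι).topologicalClosure := by
  have hJ := (S.symplecticGroup ι).le_topologicalClosure (J_mem_symplecticGroup S)
  have hnegJ := (S.symplecticGroup ι).le_topologicalClosure (neg_J_mem_symplecticGroup S)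
  rw [lowerUnipotent_eq_J_mul_upperUnipotent_mul]
  exact mul_mem (mul_mem hJ (upperUnipotent_mem_topologicalClosure hS hC.neg)) hnegJ

theorem levi_transvection_mem_topologicalClosure {i j : ι} (hij : i ≠ j) (c : ℝ) :
    levi (transvection i j c) ∈ (S.symplecticGroup ι).topologicalClosure := by
  have htransvection {i j : ι} {c : ℝ} (hc : c ∈ S) : transvection i j c ∈ S.matrix :=
    add_mem (one_mem _) (single_mem_matrix S hc)
  have hsingle (a b : ι) : Continuous fun c : ℝ ↦ (single a b c : Matrix ι ι ℝ) :=
    (continuous_id.smul continuous_const).congr fun c ↦ (smul_single c a b (1 : ℝ)).trans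
      (by rw [smul_eq_mul, mul_one])
  rw [levi_transvection hij]
  refine mem_topologicalClosure_of_continuous hS (by unfold transvection; fun_prop)
    (fun c hc ↦ ⟨?_, fromBlocks_mem_matrix S (htransvection hc) (zero_mem _) (zero_mem _)
      (htransvection (neg_mem hc))⟩) c
  rw [← levi_transvection hij]
  exact levi_mem (by simp [det_transvection_of_ne _ _ hij])

theorem levi_mem_topologicalClosure_of_isSymm {X : Matrix ι ι ℝ} (hX : X.IsSymm)
    (hdet : IsUnit X.det) : levi X ∈ (S.symplecticGroup ι).topologicalClosure := by
  have hU {B : Matrix ι ι ℝ} := upperUnipotent_mem_topologicalClosure (B := B) hS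
  have hL {C : Matrix ι ι ℝ} := lowerUnipotent_mem_topologicalClosure (C := C) hS
  rw [levi_eq_unipotent_prod hX hdet]
  exact mul_mem (mul_mem (mul_mem (hU hX) (hL hX.inv.neg)) (hU hX))
    (mul_mem (mul_mem (hU isSymm_one.neg) (hL isSymm_one)) (hU isSymm_one.neg))

theorem levi_mem_topologicalClosure {E : Matrix ι ι ℝ} (hE : IsUnit E.det) :
    levi E ∈ (S.symplecticGroup ι).topologicalClosure := by
  obtain ⟨L, L', d, rfl⟩ := Pivot.exists_list_transvec_mul_diagonal_mul_list_transvec E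
  have hL (L : List (TransvectionStruct ι ℝ)) :
      levi (L.map TransvectionStruct.toMatrix).prod ∈
        (S.symplecticGroup ι).topologicalClosure := by
    rw [map_list_prod]
    refine list_prod_mem fun _ hA ↦ ?_
    obtain ⟨t, -, rfl⟩ := List.mem_map.1 (List.map_map ▸ hA)
    exact levi_transvection_mem_topologicalClosure hS t.hij t.c
  simp only [det_mul, TransvectionStruct.det_toMatrix_prod, one_mul, mul_one] at hE
  rw [map_mul, map_mul]
  exact mul_mem (mul_mem (hL L) (levi_mem_topologicalClosure_of_isSymm hS (isSymm_diagonal d) hE))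
    (hL L')

theorem fromBlocks_mem_topologicalClosure {A B C D : Matrix ι ι ℝ}
    (h : fromBlocks A B C D ∈ Matrix.symplecticGroup ι ℝ) (hA : IsUnit A.det) :
    fromBlocks A B C D ∈ (S.symplecticGroup ι).topologicalClosure := by
  set Y := C * A⁻¹
  have hY : Y.IsSymm := isSymm_mul_inv_of_fromBlocks_mem h hA
  have hclear : lowerUnipotent (-Y) * fromBlocks A B C D = fromBlocks A B 0 (D - Y * B) := by
    rw [lowerUnipotent_mul_fromBlocks, Matrix.neg_mul, Matrix.neg_mul, Matrix.mul_assoc,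
      nonsing_inv_mul _ hA, mul_one, neg_add_cancel, neg_add_eq_sub]
  obtain ⟨hfac, hsymm⟩ :=
    fromBlocks_zero₂₁_eq_levi_mul (hclear ▸ mul_mem (lowerUnipotent_mem hY.neg) h)
  have hM : fromBlocks A B C D = lowerUnipotent Y * fromBlocks A B 0 (D - Y * B) := by
    rw [← hclear, ← mul_assoc, ← lowerUnipotent_add, add_neg_cancel, lowerUnipotent_zero, one_mul]
  rw [hM, hfac]
  exact mul_mem (lowerUnipotent_mem_topologicalClosure hS hY)
    (mul_mem (levi_mem_topologicalClosure hS hA) (upperUnipotent_mem_topologicalClosure hS hsymm))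

theorem symplecticGroup_le_topologicalClosure :
    Matrix.symplecticGroup ι ℝ ≤ (S.symplecticGroup ι).topologicalClosure := by
  intro M hM
  obtain ⟨A, B, C, D, rfl⟩ : ∃ A B C D, M = fromBlocks A B C D :=
    ⟨_, _, _, _, M.fromBlocks_toBlocks.symm⟩
  obtain ⟨s, hs⟩ := exists_isUnit_det_add_smul (fromBlocks_mem_iff.1 hM).1
    (posDef_transpose_mul_add_transpose_mul (symplectic_det hM))
  have hsym : (s • 1 : Matrix ι ι ℝ).IsSymm := isSymm_one.smul s
  have hshear : fromBlocks A B C D =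
      upperUnipotent (-(s • 1)) * (upperUnipotent (s • 1) * fromBlocks A B C D) := by
    rw [← mul_assoc, ← upperUnipotent_add, neg_add_cancel, upperUnipotent_zero, one_mul]
  have hsheared := mul_mem (upperUnipotent_mem hsym) hM
  rw [upperUnipotent_mul_fromBlocks] at hsheared
  rw [hshear, upperUnipotent_mul_fromBlocks]
  exact mul_mem (upperUnipotent_mem_topologicalClosure hS hsym.neg)
    (fromBlocks_mem_topologicalClosure hS hsheared (by simpa using hs))

end Subring

def intAdjoinInv (ℓ : ℕ) [NeZero ℓ] : Subring ℝ where
  carrier := {x | ∃ (a : ℤ) (k : ℕ), x = a / ℓ ^ k}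
  mul_mem' := by
    rintro _ _ ⟨a, k, rfl⟩ ⟨b, m, rfl⟩
    exact ⟨a * b, k + m, by push_cast; ring⟩
  one_mem' := ⟨1, 0, by simp⟩
  add_mem' := by
    rintro _ _ ⟨a, k, rfl⟩ ⟨b, m, rfl⟩
    have hℓ : (ℓ : ℝ) ≠ 0 := Nat.cast_ne_zero.2 (NeZero.ne ℓ)
    refine ⟨a * ℓ ^ m + b * ℓ ^ k, k + m, ?_⟩
    rw [div_add_div _ _ (pow_ne_zero _ hℓ) (pow_ne_zero _ hℓ), pow_add]
    push_cast
    ring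
  zero_mem' := ⟨0, 0, by simp⟩
  neg_mem' := by
    rintro _ ⟨a, k, rfl⟩
    exact ⟨-a, k, by push_cast; ring⟩

theorem dense_intAdjoinInv {ℓ : ℕ} [NeZero ℓ] (hℓ : 1 < ℓ) : Dense (intAdjoinInv ℓ : Set ℝ) :=
  (intAdjoinInv ℓ).toAddSubgroup.dense_of_not_isolated_zero fun ε hε ↦ by
    obtain ⟨n, hn⟩ := exists_pow_lt_of_lt_one hε (inv_lt_one_of_one_lt₀ (Nat.one_lt_cast.2 hℓ))
    exact ⟨1 / ℓ ^ n, ⟨1, n, by simp⟩, by positivity, by simpa [inv_pow] using hn⟩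

theorem symplectic_Z_inv_ell_dense_general (g : ℕ) (ℓ : ℕ) (hℓ : ℓ.Prime)
    (M : Matrix (Fin g ⊕ Fin g) (Fin g ⊕ Fin g) ℝ)
    (hM : M * Matrix.fromBlocks 0 1 (-1) 0 * Mᵀ = Matrix.fromBlocks 0 1 (-1) 0) :
    M ∈ closure {N : Matrix (Fin g ⊕ Fin g) (Fin g ⊕ Fin g) ℝ |
      N * Matrix.fromBlocks 0 1 (-1) 0 * Nᵀ = Matrix.fromBlocks 0 1 (-1) 0 ∧
      ∀ i j, ∃ (a : ℤ) (k : ℕ), N i j = (a : ℝ) / ℓ ^ k} := by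
  have : NeZero ℓ := ⟨hℓ.ne_zero⟩
  have hsymp (N : Matrix (Fin g ⊕ Fin g) (Fin g ⊕ Fin g) ℝ) :
      N * fromBlocks 0 1 (-1) 0 * Nᵀ = fromBlocks 0 1 (-1) 0 ↔
        N ∈ symplecticGroup (Fin g) ℝ := by
    rw [show (fromBlocks 0 1 (-1) 0 : Matrix (Fin g ⊕ Fin g) (Fin g ⊕ Fin g) ℝ) = -J (Fin g) ℝ by
      simp [J, fromBlocks_neg], SymplecticGroup.mem_iff, Matrix.mul_neg, Matrix.neg_mul, neg_inj]
  refine closure_mono ?_ ((intAdjoinInv ℓ).symplecticGroup_le_topologicalClosure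
    (dense_intAdjoinInv hℓ.one_lt) ((hsymp M).1 hM))
  rintro N ⟨hN, hNS⟩
  exact ⟨(hsymp N).2 hN, hNS⟩

/-- For a positive integer `g` and a prime `ℓ`, the subgroup
`Sp₂g(ℤ[1/ℓ])` of real symplectic matrices all of whose entries lie in `ℤ[1/ℓ]`
(i.e. are of the form `a / ℓᵏ` with `a ∈ ℤ`, `k ∈ ℕ`) is dense in `Sp₂g(ℝ)`:
the closure of the set of such matrices contains every real symplectic matrix,
where `J = [[0, 1], [−1, 0]]`. -/
theorem symplectic_Z_inv_ell_dense (g : ℕ) (hg : 0 < g) (ℓ : ℕ) (hℓ : ℓ.Prime)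
    (M : Matrix (Fin g ⊕ Fin g) (Fin g ⊕ Fin g) ℝ)
    (hM : M * Matrix.fromBlocks 0 1 (-1) 0 * Mᵀ = Matrix.fromBlocks 0 1 (-1) 0) :
    M ∈ closure {N : Matrix (Fin g ⊕ Fin g) (Fin g ⊕ Fin g) ℝ |
      N * Matrix.fromBlocks 0 1 (-1) 0 * Nᵀ = Matrix.fromBlocks 0 1 (-1) 0 ∧
      ∀ i j, ∃ (a : ℤ) (k : ℕ), N i j = (a : ℝ) / ℓ ^ k} :=
  symplectic_Z_inv_ell_dense_general g ℓ hℓ M hM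
end
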